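/- Let n ≥ 1 and let I : (Fin n → ℝ) → ℝ satisfy the normalization axiom I5 on nonnegative vectors: I(x) ≥ 0 for every x with x i ≥ 0 for all i, and I(x) = 0 if and only if x is constant. Define R_I(x) := E(x)·(1 + I(x)). Then R_I satisfies aversity F6 on nonnegative vectors (R_I(x) > E(x) for every nonconstant x with x i ≥ 0 for all i) and F8 on nonnegative constants (R_I(c·1) = c for every c ≥ 0). Conversely, if R : (Fin n → ℝ) → ℝ satisfies F6 on nonnegative vectors and F8 on nonnegative constants, then I_R defined by I_R(x) := R(x)/E(x) − 1 when E(x) ≠ 0 and I_R(x) := 0 when E(x) = 0 satisfies I5 on nonnegative vectors. -/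

import Mathlib

/-!
A nonnegative nonconstant vector has positive mean, so multiplying or dividing by `E(x)`
preserves the strict inequalities `I(x) > 0` and `R(x) > E(x)`, which turn into each other
through `R = E · (1 + I)`; on constants both sides are trivial since `E(c·1) = c`.
-/

noncomputable section

variable {n : ℕ}

def mean (x : Fin n → ℝ) : ℝ := (∑ i, x i) / n

def IsConst (x : Fin n → ℝ) : Prop := ∃ c : ℝ, ∀ i, x i = c

/-- Axiom I5 on nonnegative vectors. -/
def Normalization (I : (Fin n → ℝ) → ℝ) : Prop :=
  (∀ x : Fin n → ℝ, (∀ i, 0 ≤ x i) → 0 ≤ I x) ∧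
    (∀ x : Fin n → ℝ, (∀ i, 0 ≤ x i) → (I x = 0 ↔ IsConst x))

/-- Axiom F6 on nonnegative vectors. -/
def Aversity (R : (Fin n → ℝ) → ℝ) : Prop :=
  ∀ x : Fin n → ℝ, (∀ i, 0 ≤ x i) → ¬ IsConst x → mean x < R x

def riskOfIneq (I : (Fin n → ℝ) → ℝ) (x : Fin n → ℝ) : ℝ := mean x * (1 + I x)

def ineqOfRisk (R : (Fin n → ℝ) → ℝ) (x : Fin n → ℝ) : ℝ :=
  if mean x = 0 then 0 else R x / mean x - 1

theorem mean_const (hn : n ≠ 0) (c : ℝ) : mean (fun _ : Fin n => c) = c := by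
  simp [mean, Finset.sum_const, hn]

theorem mean_pos_of_not_isConst {x : Fin n → ℝ} (hx : ∀ i, 0 ≤ x i) (hnc : ¬ IsConst x) :
    0 < mean x := by
  have hn : 0 < n := Nat.pos_of_ne_zero fun hn => hnc ⟨0, fun i => (hn ▸ i).elim0⟩
  have hx0 : 0 < x := lt_of_le_of_ne (Pi.le_def.mpr hx) fun h => hnc ⟨0, fun i => by simp [← h]⟩
  exact div_pos (Fintype.sum_pos hx0) (by exact_mod_cast hn)

theorem Normalization.aversity_riskOfIneq {I : (Fin n → ℝ) → ℝ} (hI : Normalization I) :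
    Aversity (riskOfIneq I) := by
  intro x hx hnc
  have hE := mean_pos_of_not_isConst hx hnc
  have hIpos : 0 < I x := (hI.1 x hx).lt_of_ne fun h => hnc ((hI.2 x hx).mp h.symm)
  unfold riskOfIneq
  nlinarith

theorem Normalization.riskOfIneq_const {I : (Fin n → ℝ) → ℝ} (hI : Normalization I)
    (hn : n ≠ 0) {c : ℝ} (hc : 0 ≤ c) : riskOfIneq I (fun _ => c) = c := by
  have hI0 : I (fun _ => c) = 0 := (hI.2 _ fun _ => hc).mpr ⟨c, fun _ => rfl⟩
  simp [riskOfIneq, hI0, mean_const hn]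

theorem Aversity.normalization_ineqOfRisk {R : (Fin n → ℝ) → ℝ} (hR : Aversity R)
    (hconst : ∀ c : ℝ, 0 ≤ c → R (fun _ => c) = c) : Normalization (ineqOfRisk R) := by
  have pos_of_not_isConst : ∀ x : Fin n → ℝ, (∀ i, 0 ≤ x i) → ¬ IsConst x →
      0 < ineqOfRisk R x := by
    intro x hx hnc
    have hE := mean_pos_of_not_isConst hx hnc
    rw [ineqOfRisk, if_neg hE.ne', sub_pos, one_lt_div hE]
    exact hR x hx hnc
  have eq_zero_of_isConst : ∀ x : Fin n → ℝ, (∀ i, 0 ≤ x i) → IsConst x →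
      ineqOfRisk R x = 0 := by
    rintro x hx ⟨c, hc⟩
    obtain rfl : x = fun _ => c := funext hc
    unfold ineqOfRisk
    split_ifs with hE
    · rfl
    have hn : n ≠ 0 := by rintro rfl; simp [mean] at hE
    rw [mean_const hn] at hE ⊢
    rw [hconst c (hx ⟨0, Nat.pos_of_ne_zero hn⟩), div_self hE, sub_self]
  refine ⟨fun x hx => ?_, fun x hx => ⟨fun h => ?_, eq_zero_of_isConst x hx⟩⟩
  · by_cases hc : IsConst x
    · exact (eq_zero_of_isConst x hx hc).ge
    · exact (pos_of_not_isConst x hx hc).le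
  · by_contra hnc
    exact (pos_of_not_isConst x hx hnc).ne' h

end

open Classical in
/-- if `I` satisfies normalization (I5) on nonnegative vectors,
then `R_I(x) := E(x)·(1 + I(x))` satisfies aversity (F6) on nonnegative vectors
and F8 on nonnegative constants; conversely, if `R` satisfies F6 and F8 then
`I_R(x) := R(x)/E(x) − 1` (and `0` when `E(x) = 0`) satisfies I5 on
nonnegative vectors. -/
theorem normalization_aversity_correspondence (n : ℕ) (hn : 1 ≤ n) :
    (∀ I : (Fin n → ℝ) → ℝ,
      ((∀ x : Fin n → ℝ, (∀ i, 0 ≤ x i) → 0 ≤ I x) ∧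
       (∀ x : Fin n → ℝ, (∀ i, 0 ≤ x i) → (I x = 0 ↔ ∃ c : ℝ, ∀ i, x i = c))) →
      ((∀ x : Fin n → ℝ, (∀ i, 0 ≤ x i) → (¬ ∃ c : ℝ, ∀ i, x i = c) →
          (∑ i, x i) / n < ((∑ i, x i) / n) * (1 + I x)) ∧
       (∀ c : ℝ, 0 ≤ c →
          ((∑ _i : Fin n, c) / n) * (1 + I (fun _ => c)) = c))) ∧
    (∀ R : (Fin n → ℝ) → ℝ,
      ((∀ x : Fin n → ℝ, (∀ i, 0 ≤ x i) → (¬ ∃ c : ℝ, ∀ i, x i = c) →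
          (∑ i, x i) / n < R x) ∧
       (∀ c : ℝ, 0 ≤ c → R (fun _ => c) = c)) →
      ((∀ x : Fin n → ℝ, (∀ i, 0 ≤ x i) →
          0 ≤ (if (∑ i, x i) / n = 0 then (0 : ℝ)
                else R x / ((∑ i, x i) / n) - 1)) ∧
       (∀ x : Fin n → ℝ, (∀ i, 0 ≤ x i) →
          ((if (∑ i, x i) / n = 0 then (0 : ℝ)
              else R x / ((∑ i, x i) / n) - 1) = 0 ↔ ∃ c : ℝ, ∀ i, x i = c)))) :=
  ⟨fun _ hI => ⟨Normalization.aversity_riskOfIneq hI,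
      fun _ hc => Normalization.riskOfIneq_const hI (by omega) hc⟩,
    fun _ hR => Aversity.normalization_ineqOfRisk hR.1 hR.2⟩
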